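/- arXiv:1208.2760 — 3 statements merged into one kernel-verified Lean document; each statement's English description precedes it below -/
import Mathlib

section
/- With the automaton A of the construction (local function f̃ as above), A is finite-number-conserving: for every finite configuration α : ℤ → Q̃ (i.e., α(x) = 0 for all but finitely many x), the sum over all x ∈ ℤ of α(x) equals the sum over all x ∈ ℤ of F̃(α)(x). -/
open scoped Classical

noncomputable section

/-- Heavy-particle part of a state: `p_C(q) = 2·sR·(q / (2·sR))`. -/
def pC (sR q : ℕ) : ℕ := 2 * sR * (q / (2 * sR))

/-- Light-particle part of a state: `p_R(q) = q mod (2·sR)`. -/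
def pR (sR q : ℕ) : ℕ := q % (2 * sR)

/-- All heavy particles `C̃ = {2k·sR : 0 ≤ k ≤ 2sC−1}`. -/
def Ctil (sC sR : ℕ) : Set ℕ := {c | ∃ k < 2 * sC, c = 2 * k * sR}

/-- All light particles `R̃ = {0,…,2sR−1}`. -/
def Rtil (sR : ℕ) : Set ℕ := {r | r < 2 * sR}

/-- `Ĉ = {2k·sR : 0 ≤ k ≤ sC−1}`. -/
def Chat (sC sR : ℕ) : Set ℕ := {c | ∃ k < sC, c = 2 * k * sR}

/-- `Č = {2(k+sC)·sR : 0 ≤ k ≤ sC−1}`. -/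
def Ccheck (sC sR : ℕ) : Set ℕ := {c | ∃ k < sC, c = 2 * (k + sC) * sR}

/-- `R̂ = {0,…,sR−1}`. -/
def Rhat (sR : ℕ) : Set ℕ := {r | r < sR}

/-- `Ř = {sR,…,2sR−1}`. -/
def Rcheck (sR : ℕ) : Set ℕ := {r | sR ≤ r ∧ r < 2 * sR}

/-- Balanced pair of states w.r.t. heavy particles. -/
def BC (sC sR q1 q2 : ℕ) : Prop :=
  pC sR q1 ∈ Chat sC sR ∧ pC sR q2 ∈ Ccheck sC sR ∧
    pC sR q1 + pC sR q2 = 2 * (2 * sC - 1) * sR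

/-- Balanced pair of states w.r.t. light particles. -/
def BR (sR q1 q2 : ℕ) : Prop :=
  pR sR q1 ∈ Rhat sR ∧ pR sR q2 ∈ Rcheck sR ∧
    pR sR q1 + pR sR q2 = 2 * sR - 1

/-- `φ̂_C : C → Ĉ` built from an arbitrary bijection `φC` of `C = Fin sC`. -/
def phatC (sC sR : ℕ) (φC : Fin sC ≃ Fin sC) (c : Fin sC) : ℕ := 2 * (φC c : ℕ) * sR

/-- `φ̂_R : R → R̂` built from an arbitrary bijection `φR` of `R = Fin sR`. -/
def phatR (sR : ℕ) (φR : Fin sR ≃ Fin sR) (r : Fin sR) : ℕ := (φR r : ℕ)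

/-- `φ̌_C(c) = 2(2sC−1)sR − φ̂_C(c)`. -/
def pcheckC (sC sR : ℕ) (φC : Fin sC ≃ Fin sC) (c : Fin sC) : ℕ :=
  2 * (2 * sC - 1) * sR - phatC sC sR φC c

/-- `φ̌_R(r) = 2sR−1 − φ̂_R(r)`. -/
def pcheckR (sR : ℕ) (φR : Fin sR ≃ Fin sR) (r : Fin sR) : ℕ :=
  2 * sR - 1 - phatR sR φR r

/-- `φ̂(c,r) = φ̂_C(c) + φ̂_R(r)`. -/
def phat (sC sR : ℕ) (φC : Fin sC ≃ Fin sC) (φR : Fin sR ≃ Fin sR)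
    (q : Fin sC × Fin sR) : ℕ := phatC sC sR φC q.1 + phatR sR φR q.2

/-- `φ̌(c,r) = φ̌_C(c) + φ̌_R(r)`. -/
def pcheck (sC sR : ℕ) (φC : Fin sC ≃ Fin sC) (φR : Fin sR ≃ Fin sR)
    (q : Fin sC × Fin sR) : ℕ := pcheckC sC sR φC q.1 + pcheckR sR φR q.2

/-- `Q̂ = {ĉ + r̂ : ĉ ∈ Ĉ, r̂ ∈ R̂}`. -/
def Qhat (sC sR : ℕ) : Set ℕ := {q | ∃ c ∈ Chat sC sR, ∃ r ∈ Rhat sR, q = c + r}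

/-- `Q̌ = {č + ř : č ∈ Č, ř ∈ Ř}`. -/
def Qcheck (sC sR : ℕ) : Set ℕ := {q | ∃ c ∈ Ccheck sC sR, ∃ r ∈ Rcheck sR, q = c + r}

/-- `φ̂_C⁻¹` applied to a heavy particle (given as a natural number). -/
def decC (sC sR : ℕ) [NeZero sC] (φC : Fin sC ≃ Fin sC) (c : ℕ) : Fin sC :=
  φC.symm ⟨(c / (2 * sR)) % sC, Nat.mod_lt _ (Nat.pos_of_ne_zero (NeZero.ne sC))⟩

/-- `φ̂_R⁻¹` applied to a light particle (given as a natural number). -/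
def decR (sR : ℕ) [NeZero sR] (φR : Fin sR ≃ Fin sR) (r : ℕ) : Fin sR :=
  φR.symm ⟨r % sR, Nat.mod_lt _ (Nat.pos_of_ne_zero (NeZero.ne sR))⟩

/-- The three-case local function `f̃` of the 4-neighbor RNCCA `A`. -/
def ftil (sC sR : ℕ) [NeZero sC] [NeZero sR] (φC : Fin sC ≃ Fin sC) (φR : Fin sR ≃ Fin sR)
    (f : Fin sC × Fin sR → Fin sC × Fin sR) (qm2 qm1 q0 q1 : ℕ) : ℕ :=
  if BR sR qm1 q0 ∧ BC sC sR q0 q1 then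
    phat sC sR φC φR (f (decC sC sR φC (pC sR q0), decR sR φR (pR sR qm1)))
  else if BR sR qm2 qm1 ∧ BC sC sR qm1 q0 then
    pcheck sC sR φC φR (f (decC sC sR φC (pC sR qm1), decR sR φR (pR sR qm2)))
  else pC sR q0 + pR sR qm1

/-- Global function `F̃` of `A` with neighborhood `(−2,−1,0,1)`. -/
def Ftil (sC sR : ℕ) [NeZero sC] [NeZero sR] (φC : Fin sC ≃ Fin sC) (φR : Fin sR ≃ Fin sR)
    (f : Fin sC × Fin sR → Fin sC × Fin sR) (α : ℤ → ℕ) (x : ℤ) : ℕ :=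
  ftil sC sR φC φR f (α (x - 2)) (α (x - 1)) (α x) (α (x + 1))

/-- The encoding `τ̃`: `τ̃(α)(2x) = φ̂(α(x))`, `τ̃(α)(2x+1) = φ̌(α(x))`. -/
def tenc (sC sR : ℕ) (φC : Fin sC ≃ Fin sC) (φR : Fin sR ≃ Fin sR)
    (α : ℤ → Fin sC × Fin sR) (y : ℤ) : ℕ :=
  if Even y then phat sC sR φC φR (α (y / 2)) else pcheck sC sR φC φR (α ((y - 1) / 2))

/-- Global function of the 2-neighbor PCA `P` with neighborhood `(0,−1)`. -/
def FP {C R : Type*} (f : C × R → C × R) (α : ℤ → C × R) (x : ℤ) : C × R :=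
  f ((α x).1, (α (x - 1)).2)

end

/-!
`F̃` satisfies a discrete continuity equation `F̃ α x = α x - J x + J (x - 1)` for a finitely
supported flux `J`, and `∑ J (x - 1) = ∑ J x`. Away from balanced pairs a cell keeps its heavy
part `p_C` and receives the light part `p_R` of its left neighbour, so `J x = p_R (α x)`. A
balanced pair `(x, x + 1)` is overwritten by `φ̂ q` and `φ̌ q`, whose sum
`2(2|C| - 1)|R| + 2|R| - 1` is also what the balance conditions force for the default update of
the pair; so the pair as a whole conserves the total and only the split between its cells changes.
-/

lemma Nat.cast_finsum' {ι M : Type*} [AddCommMonoidWithOne M] [CharZero M] (f : ι → ℕ) :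
    ((∑ᶠ x, f x : ℕ) : M) = ∑ᶠ x, (f x : M) := by
  by_cases hf : f.HasFiniteSupport
  · exact (Nat.castAddMonoidHom M).map_finsum hf
  · have hf' : ¬ (fun x ↦ (f x : M)).HasFiniteSupport :=
      fun h ↦ hf <| h.of_comp Nat.cast_zero Nat.cast_injective
    rw [finsum_of_not_hasFiniteSupport hf, finsum_of_not_hasFiniteSupport hf', Nat.cast_zero]

theorem finsum_eq_of_eq_sub_add_sub_one {G : Type*} [AddCommGroup G] {g g' J : ℤ → G}
    (hg : g.HasFiniteSupport) (hJ : J.HasFiniteSupport)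
    (h : ∀ x, g' x = g x - J x + J (x - 1)) :
    ∑ᶠ x, g' x = ∑ᶠ x, g x := by
  have hJ' : (fun x ↦ J (x - 1)).HasFiniteSupport := hJ.fun_comp_of_injective sub_left_injective
  have hshift : ∑ᶠ x, J (x - 1) = ∑ᶠ x, J x := finsum_comp_equiv (Equiv.subRight 1)
  rw [funext h, finsum_add_distrib (hg.fun_sub hJ) hJ', finsum_sub_distrib hg hJ, hshift,
    sub_add_cancel]

@[simp] lemma pR_zero (sR : ℕ) : pR sR 0 = 0 := by simp [pR]

lemma pC_add_pR (sR q : ℕ) : pC sR q + pR sR q = q := Nat.div_add_mod q (2 * sR)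

lemma phat_add_pcheck (sC sR : ℕ) (φC : Fin sC ≃ Fin sC) (φR : Fin sR ≃ Fin sR)
    (q : Fin sC × Fin sR) :
    phat sC sR φC φR q + pcheck sC sR φC φR q = 2 * (2 * sC - 1) * sR + (2 * sR - 1) := by
  have hC : phatC sC sR φC q.1 ≤ 2 * (2 * sC - 1) * sR := by
    have := (φC q.1).2
    unfold phatC
    gcongr
    omega
  have hR : phatR sR φR q.2 ≤ 2 * sR - 1 := by
    have := (φR q.2).2
    unfold phatR
    omega
  unfold phat pcheck pcheckC pcheckR
  omega

/-- A balanced pair `(x, x + 1)` encodes one cell of the partitioned automaton; the first two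
cases of `ftil` fire exactly on such pairs. -/
def IsBalancedAt (sC sR : ℕ) (α : ℤ → ℕ) (x : ℤ) : Prop :=
  BR sR (α (x - 1)) (α x) ∧ BC sC sR (α x) (α (x + 1))

/-- `f` applied to the cell of the partitioned automaton encoded by the balanced pair at `x`. -/
def balancedUpdate (sC sR : ℕ) [NeZero sC] [NeZero sR] (φC : Fin sC ≃ Fin sC)
    (φR : Fin sR ≃ Fin sR) (f : Fin sC × Fin sR → Fin sC × Fin sR) (α : ℤ → ℕ) (x : ℤ) :
    Fin sC × Fin sR :=
  f (decC sC sR φC (pC sR (α x)), decR sR φR (pR sR (α (x - 1))))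

section

variable {sC sR : ℕ} {α : ℤ → ℕ} {x : ℤ}

lemma IsBalancedAt.ne_zero (h : IsBalancedAt sC sR α x) : α x ≠ 0 := by
  intro h0
  have := h.1.2.1
  simp only [h0, pR_zero, Rcheck, Set.mem_ofPred_eq] at this
  omega

lemma IsBalancedAt.not_add_one (h : IsBalancedAt sC sR α x) :
    ¬ IsBalancedAt sC sR α (x + 1) := by
  intro h'
  have hcheck := h.1.2.1
  have hhat := h'.1.1
  rw [add_sub_cancel_right] at hhat
  simp only [Rcheck, Rhat, Set.mem_ofPred_eq] at hcheck hhat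
  omega

lemma IsBalancedAt.not_sub_one (h : IsBalancedAt sC sR α x) :
    ¬ IsBalancedAt sC sR α (x - 1) :=
  fun h' ↦ h'.not_add_one (by rwa [sub_add_cancel])

variable [NeZero sC] [NeZero sR] (φC : Fin sC ≃ Fin sC) (φR : Fin sR ≃ Fin sR)
  (f : Fin sC × Fin sR → Fin sC × Fin sR)

lemma Ftil_of_not_isBalancedAt (h : ¬ IsBalancedAt sC sR α x)
    (h' : ¬ IsBalancedAt sC sR α (x - 1)) :
    Ftil sC sR φC φR f α x = pC sR (α x) + pR sR (α (x - 1)) := by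
  unfold IsBalancedAt at h h'
  rw [sub_sub, sub_add_cancel, one_add_one_eq_two] at h'
  rw [Ftil, ftil, if_neg h, if_neg h']

lemma Ftil_of_isBalancedAt (h : IsBalancedAt sC sR α x) :
    Ftil sC sR φC φR f α x = phat sC sR φC φR (balancedUpdate sC sR φC φR f α x) := by
  rw [Ftil, ftil]
  exact if_pos h

lemma Ftil_add_one_of_isBalancedAt (h : IsBalancedAt sC sR α x) :
    Ftil sC sR φC φR f α (x + 1) = pcheck sC sR φC φR (balancedUpdate sC sR φC φR f α x) := by
  have h' := h.not_add_one
  have e1 : x + 1 - 1 = x := by ring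
  have e2 : x + 1 - 2 = x - 1 := by ring
  unfold IsBalancedAt at h h'
  rw [e1] at h'
  rw [Ftil, ftil, e1, e2, if_neg h']
  exact if_pos h

lemma Ftil_add_Ftil_add_one (h : IsBalancedAt sC sR α x) :
    Ftil sC sR φC φR f α x + Ftil sC sR φC φR f α (x + 1) =
      pC sR (α x) + pR sR (α (x - 1)) + (pC sR (α (x + 1)) + pR sR (α x)) := by
  have hRsum := h.1.2.2
  have hCsum := h.2.2.2
  rw [Ftil_of_isBalancedAt φC φR f h, Ftil_add_one_of_isBalancedAt φC φR f h, phat_add_pcheck]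
  omega

/-- The amount carried from cell `x` to cell `x + 1` by one step of `Ftil`: the light part
`pR (α x)`, except on a balanced pair, where all of the new `x + 1` but its own heavy part
comes from `x`. -/
noncomputable def flux (α : ℤ → ℕ) (x : ℤ) : ℤ :=
  if IsBalancedAt sC sR α x then (Ftil sC sR φC φR f α (x + 1) : ℤ) - pC sR (α (x + 1))
  else pR sR (α x)

lemma hasFiniteSupport_flux (hα : α.HasFiniteSupport) :
    (flux φC φR f α).HasFiniteSupport := by
  refine hα.subset fun x hx h0 ↦ hx ?_
  have hx' : ¬ IsBalancedAt sC sR α x := fun h ↦ h.ne_zero h0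
  rw [flux, if_neg hx', h0, pR_zero, Nat.cast_zero]

lemma Ftil_eq_sub_flux_add_flux :
    (Ftil sC sR φC φR f α x : ℤ) = α x - flux φC φR f α x + flux φC φR f α (x - 1) := by
  have hdecomp := congrArg (Nat.cast : ℕ → ℤ) (pC_add_pR sR (α x))
  push_cast at hdecomp
  by_cases hx : IsBalancedAt sC sR α x
  · have hpair := congrArg (Nat.cast : ℕ → ℤ) (Ftil_add_Ftil_add_one φC φR f hx)
    push_cast at hpair
    rw [flux, flux, if_pos hx, if_neg hx.not_sub_one]
    linarith
  by_cases hx' : IsBalancedAt sC sR α (x - 1)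
  · rw [flux, flux, if_neg hx, if_pos hx', sub_add_cancel]
    linarith
  · rw [flux, flux, if_neg hx, if_neg hx', Ftil_of_not_isBalancedAt φC φR f hx hx']
    push_cast
    linarith

end

theorem stmt6_general (sC sR : ℕ) [NeZero sC] [NeZero sR] (φC : Fin sC ≃ Fin sC)
    (φR : Fin sR ≃ Fin sR) (f : Fin sC × Fin sR → Fin sC × Fin sR)
    (α : ℤ → ℕ) (hfin : {x : ℤ | α x ≠ 0}.Finite) :
    ∑ᶠ x : ℤ, α x = ∑ᶠ x : ℤ, Ftil sC sR φC φR f α x := by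
  have hα : α.HasFiniteSupport := hfin
  have hαZ : (fun x ↦ (α x : ℤ)).HasFiniteSupport := hα.fun_comp Nat.cast_zero
  apply Nat.cast_injective (R := ℤ)
  rw [Nat.cast_finsum', Nat.cast_finsum']
  exact (finsum_eq_of_eq_sub_add_sub_one hαZ (hasFiniteSupport_flux φC φR f hα)
    fun x ↦ Ftil_eq_sub_flux_add_flux φC φR f).symm

theorem stmt6 (sC sR : ℕ) [NeZero sC] [NeZero sR] (φC : Fin sC ≃ Fin sC)
    (φR : Fin sR ≃ Fin sR) (f : Fin sC × Fin sR → Fin sC × Fin sR)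
    (hf : Function.Injective f) (α : ℤ → ℕ)
    (hα : ∀ x : ℤ, α x < 4 * sC * sR) (hfin : {x : ℤ | α x ≠ 0}.Finite) :
    ∑ᶠ x : ℤ, α x = ∑ᶠ x : ℤ, Ftil sC sR φC φR f α x :=
  stmt6_general sC sR φC φR f α hfin
end

section
/- In the construction of A from P, the B_C-blocks are stationary and B_R-blocks shift right: for every configuration α : ℤ → Q̃ and every x ∈ ℤ, (α(x),α(x+1)) ∈ B_C if and only if (F̃(α)(x), F̃(α)(x+1)) ∈ B_C, and (α(x),α(x+1)) ∈ B_R if and only if (F̃(α)(x+1), F̃(α)(x+2)) ∈ B_R. -/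
open scoped Classical

/-!
Call `y` a collision site of `α` when `(α (y-1), α y) ∈ B_R` and `(α y, α (y+1)) ∈ B_C`:
this is exactly when `f̃` takes its first case at `y`, and then it takes its second case
at `y + 1`.
Two collision sites are never adjacent, since a heavy part cannot lie in both `Ĉ` and `Č`.
At a collision site `y` the cells `y, y+1` of `F̃ α` receive `φ̂ g, φ̌ g`, a pair that is
balanced for both kinds of particles; at every other cell `F̃` keeps the heavy part and takes the
light part from the left neighbour, so `B_C`-pairs stay put and `B_R`-pairs move one cell right.
A `φ̌`-value cannot start, and a `φ̂`-value cannot end, a balanced pair, because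
`Ĉ ∩ Č = R̂ ∩ Ř = ∅`; this rules out spurious balanced pairs next to a collision.
-/

section Decomposition

variable {sC sR : ℕ}

lemma pC_two_mul_add {r : ℕ} (hr : r < 2 * sR) (k : ℕ) :
    pC sR (2 * sR * k + r) = 2 * sR * k := by
  rw [pC, Nat.mul_add_div (by omega), Nat.div_eq_of_lt hr, Nat.add_zero]

lemma pR_two_mul_add {r : ℕ} (hr : r < 2 * sR) (k : ℕ) : pR sR (2 * sR * k + r) = r := by
  rw [pR, Nat.mul_add_mod, Nat.mod_eq_of_lt hr]

lemma pC_pC_add_pR (hsR : 0 < sR) (q q' : ℕ) : pC sR (pC sR q + pR sR q') = pC sR q :=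
  pC_two_mul_add (Nat.mod_lt _ (by omega)) _

lemma pR_pC_add_pR (hsR : 0 < sR) (q q' : ℕ) : pR sR (pC sR q + pR sR q') = pR sR q' :=
  pR_two_mul_add (Nat.mod_lt _ (by omega)) _

lemma pcheckC_eq (φC : Fin sC ≃ Fin sC) (c : Fin sC) :
    pcheckC sC sR φC c = 2 * sR * (2 * sC - 1 - (φC c : ℕ)) := by
  have := (φC c).isLt
  rw [pcheckC, phatC, ← Nat.sub_mul, show 2 * (2 * sC - 1) - 2 * (φC c : ℕ)
    = 2 * (2 * sC - 1 - (φC c : ℕ)) by omega]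
  ring

variable (φC : Fin sC ≃ Fin sC) (φR : Fin sR ≃ Fin sR) (q : Fin sC × Fin sR)

lemma phat_eq : phat sC sR φC φR q = 2 * sR * (φC q.1 : ℕ) + phatR sR φR q.2 := by
  rw [phat, phatC]; ring

lemma pcheck_eq :
    pcheck sC sR φC φR q = 2 * sR * (2 * sC - 1 - (φC q.1 : ℕ)) + pcheckR sR φR q.2 := by
  rw [pcheck, pcheckC_eq]

lemma phatR_lt (r : Fin sR) : phatR sR φR r < 2 * sR := by
  have := (φR r).isLt; rw [phatR]; omega

lemma pcheckR_lt (r : Fin sR) : pcheckR sR φR r < 2 * sR := by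
  have := r.pos; rw [pcheckR]; omega

lemma pC_phat : pC sR (phat sC sR φC φR q) = phatC sC sR φC q.1 := by
  rw [phat_eq, pC_two_mul_add (phatR_lt φR q.2), phatC]; ring

lemma pR_phat : pR sR (phat sC sR φC φR q) = phatR sR φR q.2 := by
  rw [phat_eq, pR_two_mul_add (phatR_lt φR q.2)]

lemma pC_pcheck : pC sR (pcheck sC sR φC φR q) = pcheckC sC sR φC q.1 := by
  rw [pcheck_eq, pC_two_mul_add (pcheckR_lt φR q.2), pcheckC_eq]

lemma pR_pcheck : pR sR (pcheck sC sR φC φR q) = pcheckR sR φR q.2 := by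
  rw [pcheck_eq, pR_two_mul_add (pcheckR_lt φR q.2)]

end Decomposition

section Balanced

variable {sC sR : ℕ}

lemma disjoint_Chat_Ccheck (hsR : 0 < sR) : Disjoint (Chat sC sR) (Ccheck sC sR) := by
  rw [Set.disjoint_left]
  rintro _ ⟨k, hk, rfl⟩ ⟨k', -, he⟩
  have := Nat.eq_of_mul_eq_mul_right hsR he
  omega

lemma disjoint_Rhat_Rcheck : Disjoint (Rhat sR) (Rcheck sR) := by
  rw [Set.disjoint_left]
  rintro r (hr : r < sR) ⟨hr', -⟩
  omega

lemma phatC_mem_Chat (φC : Fin sC ≃ Fin sC) (c : Fin sC) : phatC sC sR φC c ∈ Chat sC sR :=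
  ⟨φC c, (φC c).isLt, rfl⟩

lemma pcheckC_mem_Ccheck (φC : Fin sC ≃ Fin sC) (c : Fin sC) :
    pcheckC sC sR φC c ∈ Ccheck sC sR := by
  have := (φC c).isLt
  refine ⟨sC - 1 - (φC c : ℕ), by omega, ?_⟩
  rw [pcheckC_eq, show sC - 1 - (φC c : ℕ) + sC = 2 * sC - 1 - (φC c : ℕ) by omega]
  ring

lemma phatR_mem_Rhat (φR : Fin sR ≃ Fin sR) (r : Fin sR) : phatR sR φR r ∈ Rhat sR :=
  (φR r).isLt

lemma pcheckR_mem_Rcheck (φR : Fin sR ≃ Fin sR) (r : Fin sR) :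
    pcheckR sR φR r ∈ Rcheck sR := by
  have := (φR r).isLt
  constructor <;> simp only [pcheckR, phatR] <;> omega

lemma BC_phat_pcheck (φC : Fin sC ≃ Fin sC) (φR : Fin sR ≃ Fin sR) (q : Fin sC × Fin sR) :
    BC sC sR (phat sC sR φC φR q) (pcheck sC sR φC φR q) := by
  have := (φC q.1).isLt
  refine ⟨?_, ?_, ?_⟩
  · rw [pC_phat]; exact phatC_mem_Chat φC q.1
  · rw [pC_pcheck]; exact pcheckC_mem_Ccheck φC q.1
  · have hle : phatC sC sR φC q.1 ≤ 2 * (2 * sC - 1) * sR :=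
      Nat.mul_le_mul_right sR (by omega)
    rw [pC_phat, pC_pcheck, pcheckC]
    omega

lemma BR_phat_pcheck (φC : Fin sC ≃ Fin sC) (φR : Fin sR ≃ Fin sR) (q : Fin sC × Fin sR) :
    BR sR (phat sC sR φC φR q) (pcheck sC sR φC φR q) := by
  have := (φR q.2).isLt
  refine ⟨?_, ?_, ?_⟩
  · rw [pR_phat]; exact phatR_mem_Rhat φR q.2
  · rw [pR_pcheck]; exact pcheckR_mem_Rcheck φR q.2
  · rw [pR_phat, pR_pcheck, pcheckR, phatR]; omega

lemma BC.not_BC_right (hsR : 0 < sR) {q₁ q₂ q₃ : ℕ} (h : BC sC sR q₁ q₂) :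
    ¬BC sC sR q₂ q₃ :=
  fun h' => Set.disjoint_left.1 (disjoint_Chat_Ccheck hsR) h'.1 h.2.1

lemma BR.not_BR_right {q₁ q₂ q₃ : ℕ} (h : BR sR q₁ q₂) : ¬BR sR q₂ q₃ :=
  fun h' => Set.disjoint_left.1 disjoint_Rhat_Rcheck h'.1 h.2.1

lemma not_BC_pcheck_left (hsR : 0 < sR) (φC : Fin sC ≃ Fin sC) (φR : Fin sR ≃ Fin sR)
    (g : Fin sC × Fin sR) (q : ℕ) : ¬BC sC sR (pcheck sC sR φC φR g) q := fun h =>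
  Set.disjoint_left.1 (disjoint_Chat_Ccheck hsR) h.1
    (pC_pcheck φC φR g ▸ pcheckC_mem_Ccheck φC g.1)

lemma not_BC_phat_right (hsR : 0 < sR) (φC : Fin sC ≃ Fin sC) (φR : Fin sR ≃ Fin sR)
    (g : Fin sC × Fin sR) (q : ℕ) : ¬BC sC sR q (phat sC sR φC φR g) := fun h =>
  Set.disjoint_left.1 (disjoint_Chat_Ccheck hsR)
    (pC_phat φC φR g ▸ phatC_mem_Chat φC g.1) h.2.1

lemma not_BR_pcheck_left (φC : Fin sC ≃ Fin sC) (φR : Fin sR ≃ Fin sR)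
    (g : Fin sC × Fin sR) (q : ℕ) : ¬BR sR (pcheck sC sR φC φR g) q := fun h =>
  Set.disjoint_left.1 disjoint_Rhat_Rcheck h.1 (pR_pcheck φC φR g ▸ pcheckR_mem_Rcheck φR g.2)

lemma not_BR_phat_right (φC : Fin sC ≃ Fin sC) (φR : Fin sR ≃ Fin sR)
    (g : Fin sC × Fin sR) (q : ℕ) : ¬BR sR q (phat sC sR φC φR g) := fun h =>
  Set.disjoint_left.1 disjoint_Rhat_Rcheck (pR_phat φC φR g ▸ phatR_mem_Rhat φR g.2) h.2.1

lemma BC_congr {q₁ q₂ q₁' q₂' : ℕ} (h₁ : pC sR q₁ = pC sR q₁')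
    (h₂ : pC sR q₂ = pC sR q₂') :
    BC sC sR q₁ q₂ ↔ BC sC sR q₁' q₂' := by
  rw [BC, BC, h₁, h₂]

lemma BR_congr {q₁ q₂ q₁' q₂' : ℕ} (h₁ : pR sR q₁ = pR sR q₁')
    (h₂ : pR sR q₂ = pR sR q₂') :
    BR sR q₁ q₂ ↔ BR sR q₁' q₂' := by
  rw [BR, BR, h₁, h₂]

end Balanced

section Collisions

def Collides (sC sR : ℕ) (α : ℤ → ℕ) (y : ℤ) : Prop :=
  BR sR (α (y - 1)) (α y) ∧ BC sC sR (α y) (α (y + 1))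

variable {sC sR : ℕ}

lemma Collides.not_succ (hsR : 0 < sR) {α : ℤ → ℕ} {y : ℤ} (h : Collides sC sR α y) :
    ¬Collides sC sR α (y + 1) :=
  fun h' => h.2.not_BC_right hsR h'.2

variable [NeZero sC] [NeZero sR] (φC : Fin sC ≃ Fin sC) (φR : Fin sR ≃ Fin sR)
  (f : Fin sC × Fin sR → Fin sC × Fin sR) {α : ℤ → ℕ} {y : ℤ}

def collisionValue (α : ℤ → ℕ) (y : ℤ) : Fin sC × Fin sR :=
  f (decC sC sR φC (pC sR (α y)), decR sR φR (pR sR (α (y - 1))))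

lemma Ftil_of_collides (h : Collides sC sR α y) :
    Ftil sC sR φC φR f α y = phat sC sR φC φR (collisionValue φC φR f α y) := by
  rw [Ftil, ftil, show y - 2 = y - 1 - 1 by ring]
  exact if_pos h

lemma Ftil_succ_of_collides (h : Collides sC sR α y) :
    Ftil sC sR φC φR f α (y + 1) = pcheck sC sR φC φR (collisionValue φC φR f α y) := by
  have hne := h.not_succ (Nat.pos_of_ne_zero (NeZero.ne sR))
  simp only [Collides, add_sub_cancel_right] at hne
  rw [Ftil, ftil, show y + 1 - 2 = y - 1 by ring, add_sub_cancel_right, if_neg hne]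
  exact if_pos h

lemma Ftil_of_not_collides (h : ¬Collides sC sR α y) (h' : ¬Collides sC sR α (y - 1)) :
    Ftil sC sR φC φR f α y = pC sR (α y) + pR sR (α (y - 1)) := by
  simp only [Collides, sub_add_cancel] at h h'
  rw [Ftil, ftil, show y - 2 = y - 1 - 1 by ring, if_neg h, if_neg h']

end Collisions

section Dynamics

variable {sC sR : ℕ} [NeZero sC] [NeZero sR] (φC : Fin sC ≃ Fin sC) (φR : Fin sR ≃ Fin sR)
  (f : Fin sC × Fin sR → Fin sC × Fin sR) (α : ℤ → ℕ) (x : ℤ)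

lemma BC_Ftil_iff :
    BC sC sR (α x) (α (x + 1)) ↔
      BC sC sR (Ftil sC sR φC φR f α x) (Ftil sC sR φC φR f α (x + 1)) := by
  have hsR : 0 < sR := Nat.pos_of_ne_zero (NeZero.ne sR)
  by_cases hx : Collides sC sR α x
  · rw [Ftil_of_collides φC φR f hx, Ftil_succ_of_collides φC φR f hx]
    exact iff_of_true hx.2 (BC_phat_pcheck φC φR _)
  by_cases hpred : Collides sC sR α (x - 1)
  · have hBC : BC sC sR (α (x - 1)) (α x) := by simpa only [sub_add_cancel] using hpred.2
    have hF : Ftil sC sR φC φR f α x =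
        pcheck sC sR φC φR (collisionValue φC φR f α (x - 1)) := by
      simpa only [sub_add_cancel] using Ftil_succ_of_collides φC φR f hpred
    rw [hF]
    exact iff_of_false (hBC.not_BC_right hsR) (not_BC_pcheck_left hsR φC φR _ _)
  by_cases hsucc : Collides sC sR α (x + 1)
  · rw [Ftil_of_collides φC φR f hsucc]
    exact iff_of_false (fun h => h.not_BC_right hsR hsucc.2) (not_BC_phat_right hsR φC φR _ _)
  rw [Ftil_of_not_collides φC φR f hx hpred,
    Ftil_of_not_collides φC φR f hsucc (by rwa [add_sub_cancel_right])]
  exact BC_congr (pC_pC_add_pR hsR _ _).symm (pC_pC_add_pR hsR _ _).symm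

lemma BR_Ftil_iff :
    BR sR (α x) (α (x + 1)) ↔
      BR sR (Ftil sC sR φC φR f α (x + 1)) (Ftil sC sR φC φR f α (x + 2)) := by
  have hsR : 0 < sR := Nat.pos_of_ne_zero (NeZero.ne sR)
  rw [show x + 2 = x + 1 + 1 by ring]
  by_cases hsucc : Collides sC sR α (x + 1)
  · rw [Ftil_of_collides φC φR f hsucc, Ftil_succ_of_collides φC φR f hsucc]
    have hBR : BR sR (α x) (α (x + 1)) := by simpa only [add_sub_cancel_right] using hsucc.1
    exact iff_of_true hBR (BR_phat_pcheck φC φR _)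
  by_cases hx : Collides sC sR α x
  · rw [Ftil_succ_of_collides φC φR f hx]
    exact iff_of_false hx.1.not_BR_right (not_BR_pcheck_left φC φR _ _)
  by_cases hsucc₂ : Collides sC sR α (x + 1 + 1)
  · have hBR : BR sR (α (x + 1)) (α (x + 1 + 1)) := by
      simpa only [add_sub_cancel_right] using hsucc₂.1
    rw [Ftil_of_collides φC φR f hsucc₂]
    exact iff_of_false (fun h => h.not_BR_right hBR) (not_BR_phat_right φC φR _ _)
  rw [Ftil_of_not_collides φC φR f hsucc (by rwa [add_sub_cancel_right]),
    Ftil_of_not_collides φC φR f hsucc₂ (by rwa [add_sub_cancel_right]), add_sub_cancel_right,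
    add_sub_cancel_right]
  exact BR_congr (pR_pC_add_pR hsR _ _).symm (pR_pC_add_pR hsR _ _).symm

end Dynamics

theorem stmt7_general (sC sR : ℕ) [NeZero sC] [NeZero sR] (φC : Fin sC ≃ Fin sC)
    (φR : Fin sR ≃ Fin sR) (f : Fin sC × Fin sR → Fin sC × Fin sR)
    (α : ℤ → ℕ) (x : ℤ) :
    (BC sC sR (α x) (α (x + 1)) ↔
      BC sC sR (Ftil sC sR φC φR f α x) (Ftil sC sR φC φR f α (x + 1))) ∧
    (BR sR (α x) (α (x + 1)) ↔
      BR sR (Ftil sC sR φC φR f α (x + 1)) (Ftil sC sR φC φR f α (x + 2))) :=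
  ⟨BC_Ftil_iff φC φR f α x, BR_Ftil_iff φC φR f α x⟩

theorem stmt7 (sC sR : ℕ) [NeZero sC] [NeZero sR] (φC : Fin sC ≃ Fin sC)
    (φR : Fin sR ≃ Fin sR) (f : Fin sC × Fin sR → Fin sC × Fin sR)
    (hf : Function.Injective f) (α : ℤ → ℕ)
    (hα : ∀ x : ℤ, α x < 4 * sC * sR) (x : ℤ) :
    (BC sC sR (α x) (α (x + 1)) ↔
      BC sC sR (Ftil sC sR φC φR f α x) (Ftil sC sR φC φR f α (x + 1))) ∧
    (BR sR (α x) (α (x + 1)) ↔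
      BR sR (Ftil sC sR φC φR f α (x + 1)) (Ftil sC sR φC φR f α (x + 2))) :=
  stmt7_general sC sR φC φR f α x
end

section
/- If a configuration α : ℤ → Q̃ contains no B_R-pair adjacent-left to a B_C-pair anywhere (i.e., there is no y with (α(y−1),α(y)) ∈ B_R and (α(y),α(y+1)) ∈ B_C), then F̃ acts on α as a pure drift: for all x, p_C(F̃(α)(x)) = p_C(α(x)) and p_R(F̃(α)(x)) = p_R(α(x−1)). -/
open scoped Classical

lemma pC_pC_add_of_lt {sR r : ℕ} (a : ℕ) (hr : r < 2 * sR) : pC sR (pC sR a + r) = pC sR a := by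
  unfold pC
  rw [Nat.mul_add_div (by omega), Nat.div_eq_of_lt hr, Nat.add_zero]

lemma pR_pC_add_of_lt {sR r : ℕ} (a : ℕ) (hr : r < 2 * sR) : pR sR (pC sR a + r) = r := by
  unfold pR pC
  rw [Nat.mul_add_mod, Nat.mod_eq_of_lt hr]

lemma pR_lt (sR : ℕ) [NeZero sR] (q : ℕ) : pR sR q < 2 * sR :=
  Nat.mod_lt _ (by have := NeZero.pos sR; omega)

lemma ftil_eq_of_not_balanced {sC sR : ℕ} [NeZero sC] [NeZero sR] (φC : Fin sC ≃ Fin sC)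
    (φR : Fin sR ≃ Fin sR) (f : Fin sC × Fin sR → Fin sC × Fin sR) {qm2 qm1 q0 q1 : ℕ}
    (h₀ : ¬ (BR sR qm1 q0 ∧ BC sC sR q0 q1)) (h₁ : ¬ (BR sR qm2 qm1 ∧ BC sC sR qm1 q0)) :
    ftil sC sR φC φR f qm2 qm1 q0 q1 = pC sR q0 + pR sR qm1 := by
  rw [ftil, if_neg h₀, if_neg h₁]

lemma Ftil_eq_of_not_balanced {sC sR : ℕ} [NeZero sC] [NeZero sR] (φC : Fin sC ≃ Fin sC)
    (φR : Fin sR ≃ Fin sR) (f : Fin sC × Fin sR → Fin sC × Fin sR) {α : ℤ → ℕ}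
    (hno : ∀ y : ℤ, ¬ (BR sR (α (y - 1)) (α y) ∧ BC sC sR (α y) (α (y + 1)))) (x : ℤ) :
    Ftil sC sR φC φR f α x = pC sR (α x) + pR sR (α (x - 1)) := by
  have hprev := hno (x - 1)
  rw [sub_sub, sub_add_cancel, show (1 : ℤ) + 1 = 2 by norm_num] at hprev
  exact ftil_eq_of_not_balanced φC φR f (hno x) hprev

theorem stmt15_general (sC sR : ℕ) [NeZero sC] [NeZero sR] (φC : Fin sC ≃ Fin sC)
    (φR : Fin sR ≃ Fin sR) (f : Fin sC × Fin sR → Fin sC × Fin sR)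
    (α : ℤ → ℕ)
    (hno : ∀ y : ℤ, ¬ (BR sR (α (y - 1)) (α y) ∧ BC sC sR (α y) (α (y + 1)))) :
    ∀ x : ℤ, pC sR (Ftil sC sR φC φR f α x) = pC sR (α x) ∧
      pR sR (Ftil sC sR φC φR f α x) = pR sR (α (x - 1)) := by
  intro x
  rw [Ftil_eq_of_not_balanced φC φR f hno x]
  exact ⟨pC_pC_add_of_lt _ (pR_lt sR _), pR_pC_add_of_lt _ (pR_lt sR _)⟩

theorem stmt15 (sC sR : ℕ) [NeZero sC] [NeZero sR] (φC : Fin sC ≃ Fin sC)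
    (φR : Fin sR ≃ Fin sR) (f : Fin sC × Fin sR → Fin sC × Fin sR)
    (hf : Function.Injective f) (α : ℤ → ℕ)
    (hα : ∀ x : ℤ, α x < 4 * sC * sR)
    (hno : ∀ y : ℤ, ¬ (BR sR (α (y - 1)) (α y) ∧ BC sC sR (α y) (α (y + 1)))) :
    ∀ x : ℤ, pC sR (Ftil sC sR φC φR f α x) = pC sR (α x) ∧
      pR sR (Ftil sC sR φC φR f α x) = pR sR (α (x - 1)) :=
  stmt15_general sC sR φC φR f α hno
end
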